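/- Fix a finite set S with |S| ≥ 2, nonnegative voting rates q, and a stationary distribution π for the chain (S,q). Define Φ : {0,1}^S → ℝ by Φ(η) = 2·∑_{x∈S} η(x)·π(x) − 1. Then for all t ≥ 0 and all η ∈ {0,1}^S, the noisy voter model satisfies E_η[Φ(η_t)] = e^{−t}·Φ(η); that is, ∑_{η' ∈ {0,1}^S} P^t(η,η')·Φ(η') = e^{−t}·Φ(η). Equivalently, Φ is an eigenfunction of the generator Q with Q·Φ = −Φ. -/

import Mathlib

open scoped BigOperators

/-- The generator of a spin system on `{0,1}^V` given flip rates `r η x`. -/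
noncomputable def genOfRate {V : Type} [Fintype V] [DecidableEq V]
    (r : (V → Bool) → V → ℝ) : Matrix (V → Bool) (V → Bool) ℝ :=
  fun η ξ =>
    (∑ x, if ξ = Function.update η x (!η x) then r η x else 0)
      - (if ξ = η then ∑ x, r η x else 0)

/-- Flip rate of the noisy voter model with voting rates `q`. -/
noncomputable def voterRate {V : Type} [Fintype V] [DecidableEq V]
    (q : V → V → ℝ) (η : V → Bool) (x : V) : ℝ :=
  1 / 2 + ∑ y ∈ Finset.univ.filter (fun y => y ≠ x), q x y * (if η y ≠ η x then 1 else 0)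

/-- Generator of the noisy voter model. -/
noncomputable def voterGen {V : Type} [Fintype V] [DecidableEq V]
    (q : V → V → ℝ) : Matrix (V → Bool) (V → Bool) ℝ :=
  genOfRate (voterRate q)

/-- Transition semigroup `P^t = exp (t Q)` of the noisy voter model. -/
noncomputable def voterP {V : Type} [Fintype V] [DecidableEq V]
    (q : V → V → ℝ) (t : ℝ) : Matrix (V → Bool) (V → Bool) ℝ :=
  NormedSpace.exp (t • voterGen q)

/-- Total variation distance between two vectors on a finite set. -/
noncomputable def tvDist {Ω : Type} [Fintype Ω] (m1 m2 : Ω → ℝ) : ℝ :=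
  (1 / 2) * ∑ s, |m1 s - m2 s|

/-- `π` is a stationary distribution for the continuous-time Markov chain `(S, q)`. -/
def IsStationaryChain {V : Type} [Fintype V] [DecidableEq V]
    (q : V → V → ℝ) (π : V → ℝ) : Prop :=
  (∀ x, 0 ≤ π x) ∧ (∑ x, π x = 1) ∧
    ∀ y, ∑ x ∈ Finset.univ.filter (fun x => x ≠ y), π x * q x y
        = π y * ∑ z ∈ Finset.univ.filter (fun z => z ≠ y), q y z

/-- `μ` is a stationary distribution for the noisy voter model with rates `q`. -/
def IsStationaryNVM {V : Type} [Fintype V] [DecidableEq V]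
    (q : V → V → ℝ) (μ : (V → Bool) → ℝ) : Prop :=
  (∀ η, 0 ≤ μ η) ∧ (∑ η, μ η = 1) ∧ ∀ ξ, ∑ η, μ η * voterGen q η ξ = 0

/-! Write `σ = ±1` for the spin; since `∑ π = 1`, `Φ(η) = ∑ₓ π(x) σ(η x)`. Flipping `x` changes `Φ`
by `-2 π(x) σ(η x)`, and on a disagreeing pair `2 σ(η x) = σ(η x) - σ(η y)`, so
`QΦ(η) = -Φ(η) - ∑ₓ ∑_{y ≠ x} π(x) q(x,y) (σ(η x) - σ(η y))`. The double sum is the `σ`-weighted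
outflow minus inflow of the chain `(S, q)` under `π`, which vanishes by stationarity. Thus
`QΦ = -Φ`, and summing the exponential series gives `exp (tQ) Φ = e^{-t} Φ`. -/

open Matrix Finset

open scoped Norms.Operator in
theorem Matrix.exp_mulVec_of_mulVec_eq_smul {ι 𝕂 : Type*} [Fintype ι] [DecidableEq ι] [RCLike 𝕂]
    {A : Matrix ι ι 𝕂} {v : ι → 𝕂} {c : 𝕂} (h : A *ᵥ v = c • v) :
    NormedSpace.exp A *ᵥ v = NormedSpace.exp c • v := by
  have hpow (k : ℕ) : A ^ k *ᵥ v = c ^ k • v := by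
    induction k with
    | zero => simp
    | succ k ih =>
      rw [pow_succ, ← mulVec_mulVec, h, mulVec_smul, ih, smul_smul, pow_succ, mul_comm]
  let L : Matrix ι ι 𝕂 →L[𝕂] (ι → 𝕂) := ((mulVecBilin 𝕂 𝕂).flip v).toContinuousLinearMap
  have hA := (NormedSpace.exp_series_hasSum_exp' (𝕂 := 𝕂) A).mapL L
  simp only [L, LinearMap.coe_toContinuousLinearMap', LinearMap.flip_apply, mulVecBilin_apply,
    smul_mulVec, hpow, smul_smul] at hA
  exact hA.unique ((NormedSpace.exp_series_hasSum_exp' (𝕂 := 𝕂) c).smul_const v)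

theorem genOfRate_mulVec {V : Type} [Fintype V] [DecidableEq V]
    (r : (V → Bool) → V → ℝ) (f : (V → Bool) → ℝ) (η : V → Bool) :
    (genOfRate r *ᵥ f) η = ∑ x, r η x * (f (Function.update η x (!η x)) - f η) := by
  simp only [mulVec, dotProduct, genOfRate, sub_mul, sum_sub_distrib, sum_mul, ite_mul, zero_mul]
  rw [sum_comm]
  simp only [sum_ite_eq', mem_univ, if_true, mul_sub, sum_sub_distrib]

theorem IsStationaryChain.sum_sum_mul_sub_eq_zero {V : Type} [Fintype V] [DecidableEq V]
    {q : V → V → ℝ} {π : V → ℝ} (hπ : IsStationaryChain q π) (f : V → ℝ) :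
    ∑ x, ∑ y ∈ univ.filter (· ≠ x), π x * q x y * (f x - f y) = 0 := by
  have hswap : ∑ x, ∑ y ∈ univ.filter (· ≠ x), π x * q x y * f y
      = ∑ y, (∑ x ∈ univ.filter (· ≠ y), π x * q x y) * f y := by
    simp only [sum_filter, sum_mul, ite_mul, zero_mul]
    rw [sum_comm]
    simp only [ne_comm]
  -- after reindexing, the `f y` part is the inflow into `y`, which stationarity equates with
  -- the outflow from `y` appearing in the `f x` part
  simp only [mul_sub, sum_sub_distrib, hswap, hπ.2.2, sub_eq_zero]
  simp only [mul_sum, sum_mul]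

def spin (b : Bool) : ℝ := if b then 1 else -1

theorem spin_not (b : Bool) : spin (!b) = -spin b := by
  cases b <;> simp [spin]

def weightedSpin {V : Type} [Fintype V] (w : V → ℝ) (η : V → Bool) : ℝ :=
  ∑ x, w x * spin (η x)

theorem weightedSpin_update_not {V : Type} [Fintype V] [DecidableEq V]
    (w : V → ℝ) (η : V → Bool) (x : V) :
    weightedSpin w (Function.update η x (!η x)) = weightedSpin w η - 2 * w x * spin (η x) := by
  rw [weightedSpin, weightedSpin, ← add_sum_erase _ _ (mem_univ x),
    ← add_sum_erase _ _ (mem_univ x)]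
  have hrest : ∑ y ∈ univ.erase x, w y * spin (Function.update η x (!η x) y)
      = ∑ y ∈ univ.erase x, w y * spin (η y) :=
    sum_congr rfl fun y hy => by rw [Function.update_of_ne (ne_of_mem_erase hy)]
  rw [hrest, Function.update_self, spin_not]
  ring

theorem ite_ne_mul_two_spin (b b' : Bool) :
    (if b' ≠ b then (1 : ℝ) else 0) * (2 * spin b) = spin b - spin b' := by
  cases b <;> cases b' <;> norm_num [spin]

theorem voterGen_mulVec_weightedSpin {V : Type} [Fintype V] [DecidableEq V]
    {q : V → V → ℝ} {π : V → ℝ} (hπ : IsStationaryChain q π) :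
    voterGen q *ᵥ weightedSpin π = -weightedSpin π := by
  funext η
  have hterm (x : V) : voterRate q η x * -(2 * π x * spin (η x))
      = -(π x * spin (η x))
        - ∑ y ∈ univ.filter (· ≠ x), π x * q x y * (spin (η x) - spin (η y)) := by
    rw [voterRate, add_mul, sum_mul, sub_eq_add_neg, ← sum_neg_distrib]
    congr 1
    · ring
    · refine sum_congr rfl fun y _ => ?_
      rw [← ite_ne_mul_two_spin]
      ring
  rw [voterGen, genOfRate_mulVec]
  simp only [weightedSpin_update_not, sub_sub_cancel_left, hterm]
  rw [sum_sub_distrib, hπ.sum_sum_mul_sub_eq_zero, sum_neg_distrib, sub_zero, Pi.neg_apply,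
    weightedSpin]

theorem IsStationaryChain.two_mul_sum_indicator_sub_one {V : Type} [Fintype V] [DecidableEq V]
    {q : V → V → ℝ} {π : V → ℝ} (hπ : IsStationaryChain q π) (η : V → Bool) :
    2 * (∑ x, (if η x then (1 : ℝ) else 0) * π x) - 1 = weightedSpin π η := by
  calc 2 * (∑ x, (if η x then (1 : ℝ) else 0) * π x) - 1
      = ∑ x, (2 * ((if η x then (1 : ℝ) else 0) * π x) - π x) := by
        rw [sum_sub_distrib, hπ.2.1, mul_sum]
    _ = weightedSpin π η := sum_congr rfl fun x _ => by cases η x <;> simp [spin, two_mul]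

theorem stmt_10_general {S : Type} [Fintype S] [DecidableEq S]
    (q : S → S → ℝ)
    (π : S → ℝ) (hπ : IsStationaryChain q π)
    (Φ : (S → Bool) → ℝ)
    (hΦ : ∀ η, Φ η = 2 * (∑ x, (if η x then (1 : ℝ) else 0) * π x) - 1) :
    (∀ t : ℝ, 0 ≤ t → ∀ η : S → Bool,
        ∑ η' : S → Bool, voterP q t η η' * Φ η' = Real.exp (-t) * Φ η)
      ∧ ∀ η : S → Bool, ∑ η' : S → Bool, voterGen q η η' * Φ η' = -Φ η := by
  have hΦspin : Φ = weightedSpin π :=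
    funext fun η => (hΦ η).trans (hπ.two_mul_sum_indicator_sub_one η)
  have hgen : voterGen q *ᵥ Φ = -Φ := hΦspin ▸ voterGen_mulVec_weightedSpin hπ
  refine ⟨fun t _ η => ?_, fun η => congrFun hgen η⟩
  have hexp := exp_mulVec_of_mulVec_eq_smul (A := t • voterGen q) (c := -t)
    (by rw [smul_mulVec, hgen, smul_neg, neg_smul])
  rw [Real.exp_eq_exp_ℝ]
  exact congrFun hexp η

/-- **Eq. (5) of Cox–Peres–Steif.** For a stationary distribution `π` of the voting chain, the
function `Φ(η) = 2 ∑_x η(x) π(x) − 1` satisfies `E_η[Φ(η_t)] = e^{−t} Φ(η)`; equivalently, `Φ`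
is an eigenfunction of the generator with `QΦ = −Φ`. -/
theorem stmt_10 {S : Type} [Fintype S] [DecidableEq S]
    (hS : 2 ≤ Fintype.card S)
    (q : S → S → ℝ) (hq : ∀ x y, 0 ≤ q x y) (hqdiag : ∀ x, q x x = 0)
    (π : S → ℝ) (hπ : IsStationaryChain q π)
    (Φ : (S → Bool) → ℝ)
    (hΦ : ∀ η, Φ η = 2 * (∑ x, (if η x then (1 : ℝ) else 0) * π x) - 1) :
    (∀ t : ℝ, 0 ≤ t → ∀ η : S → Bool,
        ∑ η' : S → Bool, voterP q t η η' * Φ η' = Real.exp (-t) * Φ η)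
      ∧ ∀ η : S → Bool, ∑ η' : S → Bool, voterGen q η η' * Φ η' = -Φ η :=
  stmt_10_general q π hπ Φ hΦ
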